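/- The polynomial f' = x₁⁶x₂y₃ − x₂⁷y₃ − x₁⁶y₂ + x₁⁵x₂y₂ + x₂⁶y₂ + x₃y₂² + x₁⁶y₃² − x₁⁵x₂y₃² − x₂⁶y₃² − x₃y₂y₃² + x₁⁴x₃ + x₃² is irreducible in ℂ[x₁, x₂, y₃, y₂, x₃]. -/

import Mathlib

/-!
Viewed as a polynomial in x₃, f' is monic of degree 2 over the domain ℂ[x₁, x₂, y₃, y₂], so it is
irreducible as soon as it has no root there, i.e. as soon as its discriminant is not a square.
Specialising x₁ = y₂ = 0, y₃ = 1 sends the discriminant to 4x₂⁶(x₂ + 1), which has odd degree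
and so is not a square in ℂ[x₂].
-/

open MvPolynomial

namespace Polynomial

variable {R : Type*} [CommRing R] [IsDomain R]

theorem irreducible_X_sq_add_C_mul_X_add_C {p q : R} (h : ∀ s : R, discrim 1 p q ≠ s ^ 2) :
    Irreducible (X ^ 2 + C p * X + C q) := by
  have hmonic : (X ^ 2 + C p * X + C q).Monic := by
    rw [add_assoc]
    exact monic_X_pow_add (degree_linear_le.trans_lt (by norm_num))
  have hdeg : (X ^ 2 + C p * X + C q).natDegree = 2 := by compute_degree!
  rw [hmonic.irreducible_iff_roots_eq_zero_of_degree_le_three hdeg.ge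
    (hdeg.trans_le (by norm_num)), Multiset.eq_zero_iff_forall_notMem]
  intro x hx
  rw [mem_roots hmonic.ne_zero, IsRoot, eval_add, eval_add, eval_mul, eval_pow, eval_C, eval_C,
    eval_X] at hx
  exact quadratic_ne_zero_of_discrim_ne_sq h x (by linear_combination hx)

theorem ne_sq_of_odd_natDegree {p : R[X]} (hp : Odd p.natDegree) (s : R[X]) : p ≠ s ^ 2 := by
  rintro rfl
  rw [natDegree_pow] at hp
  exact Nat.not_odd_iff_even.mpr (even_two_mul _) hp

end Polynomial

noncomputable def polynomialX4Equiv (R : Type*) [CommSemiring R] :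
    MvPolynomial (Fin 5) R ≃ₐ[R] Polynomial (MvPolynomial (Fin 4) R) :=
  (renameEquiv R (Equiv.swap 0 4)).trans (finSuccEquiv R 4)

theorem polynomialX4Equiv_X (R : Type*) [CommSemiring R] (i : Fin 5) :
    polynomialX4Equiv R (X i) =
      ![Polynomial.C (X 3), Polynomial.C (X 0), Polynomial.C (X 1), Polynomial.C (X 2),
        Polynomial.X] i := by
  fin_cases i <;> simp [polynomialX4Equiv, finSuccEquiv_apply, Equiv.swap_apply_def] <;> rfl

noncomputable def fprimeCoeffOne : MvPolynomial (Fin 4) ℂ := X 2 ^ 2 - X 2 * X 1 ^ 2 + X 3 ^ 4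

noncomputable def fprimeCoeffZero : MvPolynomial (Fin 4) ℂ :=
  X 3 ^ 6 * X 0 * X 1 - X 0 ^ 7 * X 1 - X 3 ^ 6 * X 2 + X 3 ^ 5 * X 0 * X 2
    + X 0 ^ 6 * X 2 + X 3 ^ 6 * X 1 ^ 2 - X 3 ^ 5 * X 0 * X 1 ^ 2 - X 0 ^ 6 * X 1 ^ 2

theorem polynomialX4Equiv_fprime : polynomialX4Equiv ℂ
      (X 0 ^ 6 * X 1 * X 2 - X 1 ^ 7 * X 2 - X 0 ^ 6 * X 3 + X 0 ^ 5 * X 1 * X 3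
        + X 1 ^ 6 * X 3 + X 4 * X 3 ^ 2 + X 0 ^ 6 * X 2 ^ 2 - X 0 ^ 5 * X 1 * X 2 ^ 2
        - X 1 ^ 6 * X 2 ^ 2 - X 4 * X 3 * X 2 ^ 2 + X 0 ^ 4 * X 4 + X 4 ^ 2) =
    Polynomial.X ^ 2 + Polynomial.C fprimeCoeffOne * Polynomial.X
      + Polynomial.C fprimeCoeffZero := by
  simp only [map_add, map_sub, map_mul, map_pow, polynomialX4Equiv_X, fprimeCoeffOne,
    fprimeCoeffZero, Matrix.cons_val_zero, Matrix.cons_val_one, Matrix.cons_val, Fin.isValue]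
  ring

theorem discrim_fprime_ne_sq (s : MvPolynomial (Fin 4) ℂ) :
    discrim 1 fprimeCoeffOne fprimeCoeffZero ≠ s ^ 2 := by
  intro h
  set φ := aeval (R := ℂ) ![Polynomial.X, 1, 0, (0 : Polynomial ℂ)]
  have hspec : φ (discrim 1 fprimeCoeffOne fprimeCoeffZero) =
      4 * Polynomial.X ^ 7 + 4 * Polynomial.X ^ 6 := by
    simp only [φ, discrim, fprimeCoeffOne, fprimeCoeffZero, map_sub, map_add, map_mul, map_pow,
      map_one, aeval_X, aeval_ofNat, Matrix.cons_val_zero, Matrix.cons_val_one, Matrix.cons_val,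
      Fin.isValue]
    ring
  have hodd : Odd (4 * Polynomial.X ^ 7 + 4 * Polynomial.X ^ 6 : Polynomial ℂ).natDegree := by
    rw [show (4 * Polynomial.X ^ 7 + 4 * Polynomial.X ^ 6 : Polynomial ℂ).natDegree = 7 by
      compute_degree!]
    decide
  exact Polynomial.ne_sq_of_odd_natDegree hodd (φ s) (by rw [← hspec, h, map_pow])

/-- the defining equation f' of the endpoint hypersurface
X'₈ ⊂ ℙ(1,1,1,2,4) is an irreducible polynomial.
Variables: X 0 = x₁, X 1 = x₂, X 2 = y₃, X 3 = y₂, X 4 = x₃. -/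
theorem fprime_irreducible :
    Irreducible
      (X 0 ^ 6 * X 1 * X 2 - X 1 ^ 7 * X 2 - X 0 ^ 6 * X 3 + X 0 ^ 5 * X 1 * X 3
        + X 1 ^ 6 * X 3 + X 4 * X 3 ^ 2 + X 0 ^ 6 * X 2 ^ 2 - X 0 ^ 5 * X 1 * X 2 ^ 2
        - X 1 ^ 6 * X 2 ^ 2 - X 4 * X 3 * X 2 ^ 2 + X 0 ^ 4 * X 4 + X 4 ^ 2 :
        MvPolynomial (Fin 5) ℂ) := by
  rw [← MulEquiv.irreducible_iff (polynomialX4Equiv ℂ), polynomialX4Equiv_fprime]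
  exact Polynomial.irreducible_X_sq_add_C_mul_X_add_C discrim_fprime_ne_sq
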